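/- arXiv:2410.07922 — 2 statements merged into one kernel-verified Lean document; each statement's English description precedes it below -/
import Mathlib

section
/- For every integer k ≥ 2, every complex root ζ of A(x) = x^k - x^{k-1} - ... - 1 other than the unique positive real root satisfies 3^{-1/k} < |ζ| < 1. -/
open Polynomial Finset

/-!
Multiplying by `x - 1` turns `A(x) = 0` into `x ^ k * (2 - x) = 1`. A root `ζ` other than `ζ₀` is
not a nonnegative real, because `ζ₀` is the only positive root and `0` is no root; so both
`‖1 + ζ‖ < 1 + ‖ζ‖` and `2 - ‖ζ‖ < ‖2 - ζ‖` are strict. With `r = ‖ζ‖`, the first gives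
`r ^ k < ∑_{j<k} r ^ j` and the second `r ^ k * (2 - r) < 1`; for `r ≥ 1` these contradict each
other, since multiplying the first by `r - 1` yields `r ^ k * (2 - r) ≥ 1`. Finally
`1 = r ^ k * ‖2 - ζ‖ ≤ r ^ k * (2 + r) < 3 * r ^ k`.
-/

lemma isRoot_X_pow_sub_geom_sum_iff {R : Type*} [CommRing R] (k : ℕ) (x : R) :
    ((X : R[X]) ^ k - ∑ j ∈ range k, X ^ j).IsRoot x ↔ x ^ k = ∑ j ∈ range k, x ^ j := by
  simp [sub_eq_zero]

lemma pow_mul_two_sub_eq_one {R : Type*} [CommRing R] {k : ℕ} {x : R}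
    (hx : x ^ k = ∑ j ∈ range k, x ^ j) : x ^ k * (2 - x) = 1 := by
  linear_combination (1 - x) * hx - geom_sum_mul x k

lemma pow_eq_geom_sum_iff_sum_inv_pow_eq_one {k : ℕ} {s : ℝ} (hs : 0 < s) :
    s ^ k = ∑ j ∈ range k, s ^ j ↔ ∑ j ∈ range k, (s ^ (k - j))⁻¹ = 1 := by
  have hsk : s ^ k ≠ 0 := by positivity
  have hterm : ∀ j ∈ range k, (s ^ (k - j))⁻¹ = s ^ j / s ^ k := by
    intro j hj
    rw [eq_div_iff hsk, ← pow_sub_mul_pow s (mem_range.mp hj).le,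
      inv_mul_cancel_left₀ (by positivity)]
  rw [sum_congr rfl hterm, ← sum_div, div_eq_one_iff_eq hsk, eq_comm]

lemma strictAntiOn_sum_inv_pow {k : ℕ} (hk : 0 < k) :
    StrictAntiOn (fun s : ℝ ↦ ∑ j ∈ range k, (s ^ (k - j))⁻¹) (Set.Ioi 0) := by
  intro s hs t ht hst
  refine sum_lt_sum_of_nonempty (nonempty_range_iff.mpr hk.ne') fun j hj ↦ ?_
  have hkj : k - j ≠ 0 := by have := mem_range.mp hj; omega
  exact (inv_lt_inv₀ (pow_pos ht _) (pow_pos hs _)).mpr (pow_lt_pow_left₀ hst (le_of_lt hs) hkj)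

lemma eq_of_pow_eq_geom_sum {k : ℕ} (hk : 0 < k) {s t : ℝ} (hs : 0 < s) (ht : 0 < t)
    (hs' : s ^ k = ∑ j ∈ range k, s ^ j) (ht' : t ^ k = ∑ j ∈ range k, t ^ j) : s = t :=
  (strictAntiOn_sum_inv_pow hk).injOn hs ht <| by
    rw [(pow_eq_geom_sum_iff_sum_inv_pow_eq_one hs).mp hs',
      (pow_eq_geom_sum_iff_sum_inv_pow_eq_one ht).mp ht']

lemma Real.rpow_neg_one_div_lt_iff {a r : ℝ} {k : ℕ} (ha : 0 ≤ a) (hr : 0 ≤ r) (hk : 0 < k) :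
    a ^ (-1 / k : ℝ) < r ↔ a⁻¹ < r ^ k := by
  rw [neg_div, one_div, rpow_neg ha, ← inv_rpow ha,
    rpow_inv_lt_iff_of_pos (inv_nonneg.mpr ha) hr (by positivity), rpow_natCast]

open scoped ComplexOrder

namespace Complex

lemma re_lt_norm_of_not_nonneg {z : ℂ} (hz : ¬ 0 ≤ z) : z.re < ‖z‖ :=
  (re_le_norm z).lt_of_ne (mt re_eq_norm.mp hz)

lemma norm_one_add_lt_of_not_nonneg {z : ℂ} (hz : ¬ 0 ≤ z) : ‖1 + z‖ < 1 + ‖z‖ := by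
  have hre := re_lt_norm_of_not_nonneg hz
  have hsq : ‖1 + z‖ ^ 2 = 1 + 2 * z.re + ‖z‖ ^ 2 := by
    rw [Complex.sq_norm, Complex.sq_norm, normSq_apply, normSq_apply]
    simp only [add_re, one_re, add_im, one_im, zero_add]
    ring
  nlinarith [norm_nonneg (1 + z), norm_nonneg z]

lemma two_sub_norm_lt_norm_two_sub_of_not_nonneg {z : ℂ} (hz : ¬ 0 ≤ z) :
    2 - ‖z‖ < ‖2 - z‖ :=
  calc 2 - ‖z‖ < 2 - z.re := by linarith [re_lt_norm_of_not_nonneg hz]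
    _ = (2 - z).re := by simp
    _ ≤ ‖2 - z‖ := re_le_norm _

lemma norm_geom_sum_lt_of_not_nonneg {k : ℕ} (hk : 2 ≤ k) {z : ℂ} (hz : ¬ 0 ≤ z) :
    ‖∑ j ∈ range k, z ^ j‖ < ∑ j ∈ range k, ‖z‖ ^ j := by
  obtain ⟨m, rfl⟩ : ∃ m, k = 2 + m := ⟨k - 2, by omega⟩
  simp only [sum_range_add, sum_range_succ, range_one, sum_singleton, pow_zero, pow_one]
  calc ‖1 + z + ∑ j ∈ range m, z ^ (2 + j)‖
      ≤ ‖1 + z‖ + ∑ j ∈ range m, ‖z‖ ^ (2 + j) := by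
        refine (norm_add_le _ _).trans (add_le_add_right ?_ _)
        simpa only [norm_pow] using norm_sum_le (range m) fun j ↦ z ^ (2 + j)
    _ < 1 + ‖z‖ + ∑ j ∈ range m, ‖z‖ ^ (2 + j) := by
        linarith [norm_one_add_lt_of_not_nonneg hz]

lemma norm_lt_one_of_pow_eq_geom_sum {k : ℕ} (hk : 2 ≤ k) {z : ℂ} (hz : ¬ 0 ≤ z)
    (hroot : z ^ k = ∑ j ∈ range k, z ^ j) : ‖z‖ < 1 := by
  set r := ‖z‖
  have hr : 0 < r := norm_pos_iff.mpr fun h ↦ hz h.ge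
  have hsum : r ^ k < ∑ j ∈ range k, r ^ j := by
    simpa only [r, ← norm_pow, hroot] using norm_geom_sum_lt_of_not_nonneg hk hz
  have hmul : r ^ k * (2 - r) < 1 := by
    calc r ^ k * (2 - r) < r ^ k * ‖2 - z‖ :=
          mul_lt_mul_of_pos_left (two_sub_norm_lt_norm_two_sub_of_not_nonneg hz) (by positivity)
      _ = 1 := by rw [← norm_pow, ← norm_mul, pow_mul_two_sub_eq_one hroot, norm_one]
  by_contra! h1
  nlinarith [geom_sum_mul r k]

lemma inv_three_lt_norm_pow {k : ℕ} {z : ℂ} (hroot : z ^ k * (2 - z) = 1) (hz : ‖z‖ < 1) :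
    3⁻¹ < ‖z‖ ^ k := by
  have h : 1 ≤ ‖z‖ ^ k * (2 + ‖z‖) := by
    calc (1 : ℝ) = ‖z‖ ^ k * ‖2 - z‖ := by rw [← norm_pow, ← norm_mul, hroot, norm_one]
      _ ≤ ‖z‖ ^ k * (2 + ‖z‖) := by
        gcongr
        simpa using norm_sub_le (2 : ℂ) z
  by_contra! h3
  nlinarith [mul_le_mul_of_nonneg_right h3 (by positivity : (0 : ℝ) ≤ 2 + ‖z‖)]

lemma not_nonneg_of_pow_eq_geom_sum {k : ℕ} (hk : 0 < k) {ζ₀ : ℝ} (h₀ : 0 < ζ₀)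
    (hroot₀ : ζ₀ ^ k = ∑ j ∈ range k, ζ₀ ^ j) {z : ℂ} (hroot : z ^ k = ∑ j ∈ range k, z ^ j)
    (hne : z ≠ ζ₀) : ¬ 0 ≤ z := by
  intro hz
  obtain ⟨hre, him⟩ := nonneg_iff.mp hz
  obtain ⟨t, ht, rfl⟩ : ∃ t : ℝ, 0 ≤ t ∧ (t : ℂ) = z := ⟨z.re, hre, ext rfl (by simpa using him)⟩
  have hroot_t : t ^ k = ∑ j ∈ range k, t ^ j := by exact_mod_cast hroot
  have ht0 : t ≠ 0 := by
    rintro rfl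
    simp [zero_pow hk.ne', zero_geom_sum, hk.ne'] at hroot_t
  exact hne (congrArg _ (eq_of_pow_eq_geom_sum hk (ht.lt_of_ne' ht0) h₀ hroot_t hroot₀))

end Complex

theorem stmt_7 (k : ℕ) (hk : 2 ≤ k) (ζ₀ : ℝ) (h₀ : 0 < ζ₀)
    (hroot₀ : ((X : Polynomial ℝ) ^ k - ∑ j ∈ range k, X ^ j).IsRoot ζ₀)
    (ζ : ℂ) (hroot : ((X : Polynomial ℂ) ^ k - ∑ j ∈ range k, X ^ j).IsRoot ζ)
    (hne : ζ ≠ (ζ₀ : ℂ)) :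
    (3 : ℝ) ^ (-(1 : ℝ) / k) < ‖ζ‖ ∧ ‖ζ‖ < 1 := by
  rw [isRoot_X_pow_sub_geom_sum_iff] at hroot₀ hroot
  have hζ : ¬ 0 ≤ ζ := Complex.not_nonneg_of_pow_eq_geom_sum (by omega) h₀ hroot₀ hroot hne
  have hlt : ‖ζ‖ < 1 := Complex.norm_lt_one_of_pow_eq_geom_sum hk hζ hroot
  refine ⟨?_, hlt⟩
  rw [Real.rpow_neg_one_div_lt_iff (by norm_num) (norm_nonneg ζ) (by omega)]
  exact Complex.inv_three_lt_norm_pow (pow_mul_two_sub_eq_one hroot) hlt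
end

section
/- With A(x) = x^k - x^{k-1} - ... - 1 having distinct roots ζ₀,…,ζ_{k-1}, for each j the product ∏_{s≠j}(ζ_j - ζ_s) equals ((k+1)ζ_j - 2k)·ζ_j^{k-1}/(ζ_j - 1). -/
/-!
The roots `ζ s` are exactly the roots of the monic polynomial `A`, so `∏_{s ≠ j} (ζ_j - ζ_s)` is
`A'(ζ_j)`. Differentiating `(X - 1) A = X^(k+1) - 2 X^k + 1` and evaluating at the root `ζ_j` gives
`(ζ_j - 1) A'(ζ_j) = (k+1) ζ_j^k - 2k ζ_j^(k-1)`, and `ζ_j ≠ 1` because `A(1) = 1 - k`.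
-/

open Finset Polynomial Lagrange

section Nodal

variable {K ι : Type*} [Field K] [Fintype ι]

theorem eq_nodal_of_monic_of_natDegree_eq_card {p : K[X]} (hp : p.Monic)
    (hdeg : p.natDegree = Fintype.card ι) {v : ι → K} (hv : Function.Injective v)
    (hroot : ∀ i, p.eval (v i) = 0) : p = nodal univ v :=
  eq_of_monic_of_dvd_of_natDegree_le nodal_monic hp
    (prod_dvd_of_coprime (fun _ _ _ _ hab => pairwise_coprime_X_sub_C hv hab)
      fun i _ => dvd_iff_isRoot.mpr (hroot i))
    (by rw [hdeg, natDegree_nodal, card_univ])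

theorem prod_erase_sub_eq_eval_derivative [DecidableEq ι] {p : K[X]} (hp : p.Monic)
    (hdeg : p.natDegree = Fintype.card ι) {v : ι → K} (hv : Function.Injective v)
    (hroot : ∀ i, p.eval (v i) = 0) (j : ι) :
    ∏ s ∈ univ.erase j, (v j - v s) = (derivative p).eval (v j) := by
  rw [eq_nodal_of_monic_of_natDegree_eq_card hp hdeg hv hroot,
    eval_nodal_derivative_eval_node_eq (mem_univ j), eval_nodal]

end Nodal

/-- The characteristic polynomial of the `k`-bonacci recurrence. -/
noncomputable def kbonacciPoly (R : Type*) [CommRing R] (k : ℕ) : R[X] :=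
  X ^ k - ∑ i ∈ range k, X ^ i

section KBonacci

variable {R : Type*} [CommRing R]

theorem eval_kbonacciPoly (k : ℕ) (x : R) :
    (kbonacciPoly R k).eval x = x ^ k - ∑ i ∈ range k, x ^ i := by
  simp [kbonacciPoly, eval_finsetSum]

theorem eval_one_kbonacciPoly (k : ℕ) : (kbonacciPoly R k).eval 1 = 1 - k := by
  simp [eval_kbonacciPoly]

theorem degree_geom_sum_lt (k : ℕ) : (∑ i ∈ range k, (X : R[X]) ^ i).degree < k :=
  (degree_sum_le _ _).trans_lt <| (Finset.sup_lt_iff (WithBot.bot_lt_coe k)).2 fun i hi =>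
    (degree_X_pow_le i).trans_lt (WithBot.coe_lt_coe.2 (mem_range.1 hi))

theorem monic_kbonacciPoly [Nontrivial R] (k : ℕ) : (kbonacciPoly R k).Monic :=
  monic_X_pow_sub (degree_geom_sum_lt k)

theorem natDegree_kbonacciPoly [Nontrivial R] (k : ℕ) : (kbonacciPoly R k).natDegree = k := by
  apply natDegree_eq_of_degree_eq_some
  rw [kbonacciPoly, degree_sub_eq_left_of_degree_lt, degree_X_pow]
  rw [degree_X_pow]
  exact degree_geom_sum_lt k

theorem X_sub_one_mul_kbonacciPoly (k : ℕ) :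
    (X - 1) * kbonacciPoly R k = X ^ (k + 1) - 2 * X ^ k + 1 := by
  rw [kbonacciPoly]
  linear_combination (-1 : R[X]) * geom_sum_mul (X : R[X]) k

theorem sub_one_mul_eval_derivative_kbonacciPoly {k : ℕ} {z : R}
    (hz : (kbonacciPoly R k).eval z = 0) :
    (z - 1) * (derivative (kbonacciPoly R k)).eval z = (k + 1) * z ^ k - 2 * k * z ^ (k - 1) := by
  have h := congrArg (fun q : R[X] => (derivative q).eval z) (X_sub_one_mul_kbonacciPoly (R := R) k)
  simp only [derivative_mul, derivative_sub, derivative_add, derivative_one, derivative_X,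
    derivative_X_pow, derivative_ofNat, eval_add, eval_sub, eval_mul, eval_pow, eval_X,
    eval_one, eval_ofNat, eval_C, eval_zero, hz] at h
  push_cast at h
  linear_combination h

end KBonacci

theorem stmt_13 (k : ℕ) (hk : 2 ≤ k) (ζ : Fin k → ℂ)
    (hroot : ∀ j, (ζ j) ^ k = ∑ i ∈ range k, (ζ j) ^ i)
    (hinj : Function.Injective ζ) (j : Fin k) :
    ∏ s ∈ Finset.univ.erase j, (ζ j - ζ s)
      = ((k + 1) * ζ j - 2 * k) * (ζ j) ^ (k - 1) / (ζ j - 1) := by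
  have hA : ∀ s, (kbonacciPoly ℂ k).eval (ζ s) = 0 := fun s => by
    rw [eval_kbonacciPoly, hroot, sub_self]
  have hζ1 : ζ j - 1 ≠ 0 := by
    intro h
    have := hA j
    rw [sub_eq_zero.mp h, eval_one_kbonacciPoly, sub_eq_zero] at this
    norm_cast at this
    omega
  rw [prod_erase_sub_eq_eval_derivative (monic_kbonacciPoly k)
    ((natDegree_kbonacciPoly k).trans (Fintype.card_fin k).symm) hinj hA, eq_div_iff hζ1,
    mul_comm, sub_one_mul_eval_derivative_kbonacciPoly (hA j)]
  obtain ⟨m, rfl⟩ : ∃ m, k = m + 1 := ⟨k - 1, by omega⟩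
  simp only [Nat.add_sub_cancel]
  ring
end
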